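/- No complex number α is both good and bad. Moreover, the number 1 is bad (and hence not good). -/

import Mathlib

open Polynomial

/-- The primitive 15th root of unity `exp(2πi/15)`. -/
noncomputable def zeta15 : ℂ := Complex.exp (2 * ↑Real.pi * Complex.I / 15)

/-- `Φ₃` evaluated at `zeta15`. -/
noncomputable def phi3z : ℂ := zeta15 ^ 2 + zeta15 + 1

/-- `Φ₅` evaluated at `zeta15`. -/
noncomputable def phi5z : ℂ := zeta15 ^ 4 + zeta15 ^ 3 + zeta15 ^ 2 + zeta15 + 1

/-- A complex number is *good* if it has a unit-times-good-form representation. -/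
noncomputable def IsGood (α : ℂ) : Prop :=
  ∃ (u v g : Polynomial ℤ) (j : ℕ) (ε : ℤ), j < 15 ∧ (ε = 1 ∨ ε = -1) ∧
    Polynomial.aeval zeta15 u * Polynomial.aeval zeta15 v = 1 ∧
    α = Polynomial.aeval zeta15 u *
      ((zeta15 ^ 5 - 1) + (ε : ℂ) * zeta15 ^ j * phi3z
        + (zeta15 - 1) * phi3z * phi5z * Polynomial.aeval zeta15 g)

/-- A complex number is *bad* if it has a unit-times-bad-form representation. -/
noncomputable def IsBad (α : ℂ) : Prop :=
  ∃ (u v g : Polynomial ℤ) (j : ℕ) (ε : ℤ), j < 15 ∧ (ε = 1 ∨ ε = -1) ∧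
    Polynomial.aeval zeta15 u * Polynomial.aeval zeta15 v = 1 ∧
    α = Polynomial.aeval zeta15 u *
      ((zeta15 ^ 5 - 1) + (ε : ℂ) * zeta15 ^ j * phi3z * (zeta15 - 1)
        + (zeta15 - 1) * phi3z * phi5z * Polynomial.aeval zeta15 g)

/- ### Auxiliary setup -/

private noncomputable def Phi : Polynomial ℤ := X^8 - X^7 + X^5 - X^4 + X^3 - X + 1

private lemma Phi_def : Phi = X^8 - X^7 + X^5 - X^4 + X^3 - X + 1 := rfl

private lemma hprim15 : IsPrimitiveRoot zeta15 15 := by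
  have h := Complex.isPrimitiveRoot_exp 15 (by norm_num)
  have e : ((15:ℕ):ℂ) = (15:ℂ) := by norm_num
  rw [e] at h
  exact h

private lemma cyclo15 : Polynomial.cyclotomic 15 ℤ = Phi := by
  have hp := Polynomial.prod_cyclotomic_eq_X_pow_sub_one (by norm_num : (0:ℕ) < 15) ℤ
  have hdiv : (Nat.divisors 15) = {1, 3, 5, 15} := by decide
  rw [hdiv] at hp
  rw [show ({1,3,5,15} : Finset ℕ) = insert 1 (insert 3 (insert 5 ({15} : Finset ℕ))) from rfl] at hp
  rw [Finset.prod_insert (by decide), Finset.prod_insert (by decide),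
    Finset.prod_insert (by decide), Finset.prod_singleton] at hp
  haveI : Fact (Nat.Prime 3) := ⟨by norm_num⟩
  haveI : Fact (Nat.Prime 5) := ⟨by norm_num⟩
  have h3 : cyclotomic 3 ℤ = X^2 + X + 1 := by
    rw [Polynomial.cyclotomic_prime ℤ 3]
    rw [Finset.sum_range_succ, Finset.sum_range_succ, Finset.sum_range_one]
    ring
  have h5 : cyclotomic 5 ℤ = X^4 + X^3 + X^2 + X + 1 := by
    rw [Polynomial.cyclotomic_prime ℤ 5]
    rw [Finset.sum_range_succ, Finset.sum_range_succ, Finset.sum_range_succ,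
      Finset.sum_range_succ, Finset.sum_range_one]
    ring
  rw [Polynomial.cyclotomic_one, h3, h5] at hp
  have key : ((X:Polynomial ℤ) - 1) * ((X^2+X+1) * ((X^4+X^3+X^2+X+1) * Phi)) = X^15 - 1 := by
    rw [Phi_def]; ring
  have hD : ((X:Polynomial ℤ) - 1) * ((X^2+X+1) * (X^4+X^3+X^2+X+1)) ≠ 0 := by
    intro h
    have := congrArg (Polynomial.eval 2) h
    simp at this
  have e1 : (((X:Polynomial ℤ) - 1) * ((X^2+X+1) * (X^4+X^3+X^2+X+1))) * cyclotomic 15 ℤ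
      = (((X:Polynomial ℤ) - 1) * ((X^2+X+1) * (X^4+X^3+X^2+X+1))) * Phi := by
    calc (((X:Polynomial ℤ) - 1) * ((X^2+X+1) * (X^4+X^3+X^2+X+1))) * cyclotomic 15 ℤ
        = ((X:Polynomial ℤ) - 1) * ((X^2+X+1) * ((X^4+X^3+X^2+X+1) * cyclotomic 15 ℤ)) := by ring
      _ = X^15 - 1 := hp
      _ = (((X:Polynomial ℤ) - 1) * ((X^2+X+1) * (X^4+X^3+X^2+X+1))) * Phi := by
          rw [← key]; ring
  exact mul_left_cancel₀ hD e1

private lemma Phi_monic : Phi.Monic := by rw [← cyclo15]; exact Polynomial.cyclotomic.monic 15 ℤ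

private lemma Phi_natDegree : Phi.natDegree = 8 := by
  rw [← cyclo15, Polynomial.natDegree_cyclotomic]; rfl

private lemma ker15 {p : Polynomial ℤ} (hp : aeval zeta15 p = 0) : Phi ∣ p := by
  have hint : IsIntegral ℤ zeta15 := hprim15.isIntegral (by norm_num)
  have hmp : minpoly ℤ zeta15 = Phi := by
    rw [← Polynomial.cyclotomic_eq_minpoly hprim15 (by norm_num)]; exact cyclo15
  exact hmp ▸ minpoly.isIntegrallyClosed_dvd hint hp

private lemma Phi_root {k : ℕ} (hk : Nat.Coprime k 15) : aeval (zeta15 ^ k) Phi = 0 := by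
  have h := (hprim15.pow_of_coprime k hk).isRoot_cyclotomic (by norm_num : 0 < 15)
  have h2 : aeval (zeta15^k) (cyclotomic 15 ℤ) = 0 := by
    rw [Polynomial.aeval_def, Polynomial.eval₂_eq_eval_map, Polynomial.map_cyclotomic]
    exact h
  rwa [cyclo15] at h2

private lemma Phi_root1 : aeval zeta15 Phi = 0 := by
  have := Phi_root (k := 1) (by norm_num)
  rwa [pow_one] at this

private lemma hPz : zeta15^8 - zeta15^7 + zeta15^5 - zeta15^4 + zeta15^3 - zeta15 + 1 = 0 := by
  have := Phi_root1
  simpa [Phi_def] using this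

private lemma h15z : zeta15 ^ 15 = 1 := hprim15.pow_eq_one

private lemma zp (q r : ℕ) : zeta15 ^ (15 * q + r) = zeta15 ^ r := by
  rw [pow_add, pow_mul, h15z, one_pow, one_mul]

private noncomputable def Tn (p : Polynomial ℤ) : Polynomial ℤ :=
  p * p.comp (X^4) * (p.comp (X^7) * p.comp (X^13))

private lemma Tn_mul (p q : Polynomial ℤ) : Tn (p * q) = Tn p * Tn q := by
  simp only [Tn, Polynomial.mul_comp]; ring

private lemma Tn_one : Tn 1 = 1 := by simp [Tn]

private lemma aeval_Tn {S : Type*} [CommRing S] [Algebra ℤ S] (x : S) (p : Polynomial ℤ) :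
    aeval x (Tn p) = aeval x p * aeval (x^4) p * (aeval (x^7) p * aeval (x^13) p) := by
  simp [Tn, Polynomial.aeval_comp]

private lemma ev_congr {S : Type*} [CommRing S] [Algebra ℤ S] {x : S}
    (hx : aeval x Phi = 0) {p q : Polynomial ℤ} (h : Phi ∣ p - q) :
    aeval x p = aeval x q := by
  obtain ⟨k, hk⟩ := h
  have h2 : aeval x p - aeval x q = 0 := by rw [← map_sub, hk, map_mul, hx, zero_mul]
  exact sub_eq_zero.mp h2

/- ### Good and bad polynomials -/

private noncomputable def GoodP (e : ℤ) (j : ℕ) (g : Polynomial ℤ) : Polynomial ℤ :=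
  (X^5 - 1) + C e * X^j * (X^2+X+1) + (X-1)*((X^2+X+1)*((X^4+X^3+X^2+X+1)*g))

private noncomputable def BadP (e : ℤ) (j : ℕ) (g : Polynomial ℤ) : Polynomial ℤ :=
  (X^5 - 1) + C e * X^j * (X^2+X+1) * (X-1) + (X-1)*((X^2+X+1)*((X^4+X^3+X^2+X+1)*g))

private lemma evalGood_C (e : ℤ) (j : ℕ) (g : Polynomial ℤ) :
    aeval zeta15 (GoodP e j g) = (zeta15 ^ 5 - 1) + (e : ℂ) * zeta15 ^ j * phi3z
      + (zeta15 - 1) * phi3z * phi5z * Polynomial.aeval zeta15 g := by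
  simp only [GoodP, phi3z, phi5z, map_add, map_sub, map_mul, map_pow, map_one,
    Polynomial.aeval_X, Polynomial.aeval_C, algebraMap_int_eq, eq_intCast, map_intCast]
  ring

private lemma evalBad_C (e : ℤ) (j : ℕ) (g : Polynomial ℤ) :
    aeval zeta15 (BadP e j g) = (zeta15 ^ 5 - 1) + (e : ℂ) * zeta15 ^ j * phi3z * (zeta15 - 1)
      + (zeta15 - 1) * phi3z * phi5z * Polynomial.aeval zeta15 g := by
  simp only [BadP, phi3z, phi5z, map_add, map_sub, map_mul, map_pow, map_one,
    Polynomial.aeval_X, Polynomial.aeval_C, algebraMap_int_eq, eq_intCast, map_intCast]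
  ring

/- ### The shape lemma -/

set_option maxHeartbeats 2000000 in
private lemma shape (w : Polynomial ℤ) :
    ∃ a b : ℤ, Phi ∣ Tn w - (C a + C b * X^5) := by
  have hρd : Phi ∣ Tn w - Tn w %ₘ Phi := by
    rw [Polynomial.modByMonic_eq_sub_mul_div _ Phi, sub_sub_cancel]
    exact Dvd.intro _ rfl
  have hlt8 : (Tn w %ₘ Phi).natDegree < 8 := by
    have h := Polynomial.natDegree_modByMonic_lt (Tn w) Phi_monic (by
      intro h1
      have h2 := Phi_natDegree
      rw [h1] at h2
      simp at h2)
    rw [Phi_natDegree] at h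
    exact h
  obtain ⟨ρ, hρ, hlt⟩ : ∃ ρ : Polynomial ℤ, (Phi ∣ Tn w - ρ) ∧ ρ.natDegree < 8 :=
    ⟨Tn w %ₘ Phi, hρd, hlt8⟩
  have hperm : aeval (zeta15 ^ 13) (Tn w) = aeval zeta15 (Tn w) := by
    rw [aeval_Tn, aeval_Tn]
    rw [← pow_mul, ← pow_mul, ← pow_mul]
    norm_num
    rw [show (52:ℕ) = 15*3+7 by norm_num, show (91:ℕ) = 15*6+1 by norm_num,
      show (169:ℕ) = 15*11+4 by norm_num, zp, zp, zp, pow_one]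
    ring
  have hρ13 : aeval (zeta15 ^ 13) ρ = aeval zeta15 ρ := by
    have a13 := ev_congr (Phi_root (show Nat.Coprime 13 15 by norm_num)) hρ
    have a1 := ev_congr Phi_root1 hρ
    rw [← a13, hperm, a1]
  set c : ℕ → ℤ := fun i => ρ.coeff i with hc
  have hrep : ρ = C (c 0) * X^0 + C (c 1) * X^1 + C (c 2) * X^2 + C (c 3) * X^3
      + C (c 4) * X^4 + C (c 5) * X^5 + C (c 6) * X^6 + C (c 7) * X^7 := by
    conv_lhs => rw [Polynomial.as_sum_range' ρ 8 hlt]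
    simp only [Finset.sum_range_succ, Finset.sum_range_zero, zero_add,
      ← Polynomial.C_mul_X_pow_eq_monomial]
    rfl
  have h13e := hρ13
  rw [hrep] at h13e
  simp only [map_add, map_mul, map_pow, Polynomial.aeval_C, Polynomial.aeval_X,
    algebraMap_int_eq, eq_intCast, map_intCast] at h13e
  have hE' : Phi ∣ (C (c 1) * (C 1 + C (-2) * X^1 + C (-1) * X^4 + C 1 * X^5 + C (-1) * X^7)
      + C (c 2) * (C (-1) * X^1 + C (-1) * X^2 + C (-1) * X^6)
      + C (c 3) * (C (-1) + C 1 * X^2 + C (-2) * X^3 + C (-1) * X^6 + C 1 * X^7)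
      + C (c 4) * (C 1 * X^7 + C (-1) * X^4)
      + C (c 6) * (C 1 * X^3 + C (-1) * X^6)
      + C (c 7) * (C 1 * X^1 + C (-1) * X^7)) := by
    apply ker15
    simp only [map_add, map_mul, map_pow, map_one, Polynomial.aeval_C, Polynomial.aeval_X,
      algebraMap_int_eq, eq_intCast, map_intCast]
    linear_combination (norm := (push_cast; ring1)) h13e
      - ((c 1 : ℂ) * ((-1:ℂ) + zeta15^3 + zeta15^4 + zeta15^5)) * hPz
      - ((c 2 : ℂ) * (zeta15 + zeta15^2 + zeta15^3)) * hPz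
      - ((c 2 : ℂ) * zeta15^11) * h15z
      - ((c 3 : ℂ) * (1 + zeta15)) * hPz
      - ((c 3 : ℂ) * (zeta15^9 + zeta15^24)) * h15z
      - ((c 4 : ℂ) * (zeta15^7 + zeta15^22 + zeta15^37)) * h15z
      - ((c 5 : ℂ) * (zeta15^5 + zeta15^20 + zeta15^35 + zeta15^50)) * h15z
      - ((c 6 : ℂ) * (zeta15^3 + zeta15^18 + zeta15^33 + zeta15^48 + zeta15^63)) * h15z
      - ((c 7 : ℂ) * (zeta15 + zeta15^16 + zeta15^31 + zeta15^46 + zeta15^61 + zeta15^76)) * h15z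
  have hE0 : (C (c 1) * (C 1 + C (-2) * X^1 + C (-1) * X^4 + C 1 * X^5 + C (-1) * X^7)
      + C (c 2) * (C (-1) * X^1 + C (-1) * X^2 + C (-1) * X^6)
      + C (c 3) * (C (-1) + C 1 * X^2 + C (-2) * X^3 + C (-1) * X^6 + C 1 * X^7)
      + C (c 4) * (C 1 * X^7 + C (-1) * X^4)
      + C (c 6) * (C 1 * X^3 + C (-1) * X^6)
      + C (c 7) * (C 1 * X^1 + C (-1) * X^7) : Polynomial ℤ) = 0 := by
    by_contra hne
    have hle := Polynomial.natDegree_le_of_dvd hE' hne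
    have hdb : (C (c 1) * (C 1 + C (-2) * X^1 + C (-1) * X^4 + C 1 * X^5 + C (-1) * X^7)
      + C (c 2) * (C (-1) * X^1 + C (-1) * X^2 + C (-1) * X^6)
      + C (c 3) * (C (-1) + C 1 * X^2 + C (-2) * X^3 + C (-1) * X^6 + C 1 * X^7)
      + C (c 4) * (C 1 * X^7 + C (-1) * X^4)
      + C (c 6) * (C 1 * X^3 + C (-1) * X^6)
      + C (c 7) * (C 1 * X^1 + C (-1) * X^7) : Polynomial ℤ).natDegree ≤ 7 := by
      compute_degree
    rw [Phi_natDegree] at hle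
    omega
  have k0 := congrArg (fun p => Polynomial.coeff p 0) hE0
  have k2 := congrArg (fun p => Polynomial.coeff p 2) hE0
  have k3 := congrArg (fun p => Polynomial.coeff p 3) hE0
  have k4 := congrArg (fun p => Polynomial.coeff p 4) hE0
  have k5 := congrArg (fun p => Polynomial.coeff p 5) hE0
  have k1 := congrArg (fun p => Polynomial.coeff p 1) hE0
  have k6 := congrArg (fun p => Polynomial.coeff p 6) hE0
  have k7 := congrArg (fun p => Polynomial.coeff p 7) hE0
  simp [Polynomial.coeff_add, Polynomial.coeff_C_mul, Polynomial.coeff_C,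
    Polynomial.coeff_X_pow, Polynomial.coeff_one, Polynomial.coeff_X] at k0 k1 k2 k3 k4 k5 k6 k7
  have hc1 : c 1 = 0 := by omega
  have hc2 : c 2 = 0 := by omega
  have hc3 : c 3 = 0 := by omega
  have hc4 : c 4 = 0 := by omega
  have hc6 : c 6 = 0 := by omega
  have hc7 : c 7 = 0 := by omega
  refine ⟨c 0, c 5, ?_⟩
  have hfin : ρ = C (c 0) + C (c 5) * X^5 := by
    rw [hrep, hc1, hc2, hc3, hc4, hc6, hc7]
    simp
  rw [← hfin]
  exact hρ

/- ### The integer unit lemma -/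

private lemma Nunit (N : ℤ) (M : Polynomial ℤ) (h : Phi ∣ C N * M - 1) : N = 1 ∨ N = -1 := by
  obtain ⟨h4, hh4⟩ := h
  have habs : N.natAbs = 1 := by
    by_contra hne
    have hex : ∃ p : ℕ, p.Prime ∧ (p:ℤ) ∣ N := by
      rcases Nat.eq_zero_or_pos N.natAbs with h0|hpos'
      · refine ⟨2, Nat.prime_two, ?_⟩
        have : N = 0 := Int.natAbs_eq_zero.mp h0
        simp [this]
      · obtain ⟨p, hp, hd⟩ := Nat.exists_prime_and_dvd hne
        refine ⟨p, hp, ?_⟩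
        have h1 : (p:ℤ) ∣ (N.natAbs : ℤ) := Int.natCast_dvd_natCast.mpr hd
        exact h1.trans (Int.natAbs_dvd.mpr dvd_rfl)
    obtain ⟨p, hp, hpd⟩ := hex
    haveI : Fact p.Prime := ⟨hp⟩
    have hmap := congrArg (Polynomial.map (Int.castRingHom (ZMod p))) hh4
    simp only [Polynomial.map_sub, Polynomial.map_mul, Polynomial.map_one,
      Polynomial.map_C] at hmap
    have hN0 : (Int.castRingHom (ZMod p)) N = 0 := by
      simpa [ZMod.intCast_zmod_eq_zero_iff_dvd] using hpd
    rw [hN0, Polynomial.C_0, zero_mul, zero_sub] at hmap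
    have hPm : (Phi.map (Int.castRingHom (ZMod p))).Monic := Phi_monic.map _
    by_cases h40 : h4.map (Int.castRingHom (ZMod p)) = 0
    · rw [h40, mul_zero] at hmap
      have : (1 : Polynomial (ZMod p)) = 0 := by
        have := congrArg (fun q => -q) hmap
        simpa using this
      exact one_ne_zero this
    · have hdeg := Polynomial.natDegree_mul hPm.ne_zero h40
      rw [← hmap] at hdeg
      have hd8 : (Phi.map (Int.castRingHom (ZMod p))).natDegree = 8 := by
        rw [Phi_monic.natDegree_map]; exact Phi_natDegree
      simp only [Polynomial.natDegree_neg, Polynomial.natDegree_one] at hdeg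
      omega
  omega

/- ### Finite rings -/

private noncomputable def f5 : Polynomial (ZMod 5) := X^2 + X + 1
private noncomputable def f3 : Polynomial (ZMod 3) := X^4 + X^3 + X^2 + X + 1

private lemma hy5 : (AdjoinRoot.root f5)^2 + (AdjoinRoot.root f5) + 1 = 0 := by
  have h : aeval (AdjoinRoot.root f5) f5 = 0 := by
    rw [AdjoinRoot.aeval_eq, AdjoinRoot.mk_self]
  rw [show f5 = X^2 + X + 1 from rfl] at h
  simp only [map_add, map_pow, map_one, Polynomial.aeval_X] at h
  exact h

private lemma hz3 : (AdjoinRoot.root f3)^4 + (AdjoinRoot.root f3)^3 + (AdjoinRoot.root f3)^2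
    + (AdjoinRoot.root f3) + 1 = 0 := by
  have h : aeval (AdjoinRoot.root f3) f3 = 0 := by
    rw [AdjoinRoot.aeval_eq, AdjoinRoot.mk_self]
  rw [show f3 = X^4 + X^3 + X^2 + X + 1 from rfl] at h
  simp only [map_add, map_pow, map_one, Polynomial.aeval_X] at h
  exact h

private lemma char5 : (5 : AdjoinRoot f5) = 0 := by
  have h2 : ((5:ℤ) : Polynomial (ZMod 5)) = 0 := by
    rw [← Polynomial.C_eq_intCast]
    have : ((5:ℤ) : ZMod 5) = 0 := by decide
    rw [this, map_zero]
  have h : ((5:ℤ) : AdjoinRoot f5) = 0 := by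
    rw [← map_intCast (AdjoinRoot.mk f5) 5, h2, map_zero]
  rw [show ((5:ℤ) : AdjoinRoot f5) = (5 : AdjoinRoot f5) by push_cast; ring] at h
  exact h

private lemma char3 : (3 : AdjoinRoot f3) = 0 := by
  have h2 : ((3:ℤ) : Polynomial (ZMod 3)) = 0 := by
    rw [← Polynomial.C_eq_intCast]
    have : ((3:ℤ) : ZMod 3) = 0 := by decide
    rw [this, map_zero]
  have h : ((3:ℤ) : AdjoinRoot f3) = 0 := by
    rw [← map_intCast (AdjoinRoot.mk f3) 3, h2, map_zero]
  rw [show ((3:ℤ) : AdjoinRoot f3) = (3 : AdjoinRoot f3) by push_cast; ring] at h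
  exact h

private lemma coord_indep {n : ℕ} [Fact (Nat.Prime n)] {F : Polynomial (ZMod n)}
    (hdeg : 2 ≤ F.natDegree) (a b : ℤ)
    (h : (a : AdjoinRoot F) + (b : AdjoinRoot F) * AdjoinRoot.root F = 0) :
    (n:ℤ) ∣ a ∧ (n:ℤ) ∣ b := by
  have ha : (a : AdjoinRoot F) = AdjoinRoot.mk F ((a : Polynomial (ZMod n))) :=
    (map_intCast (AdjoinRoot.mk F) a).symm
  have hb : (b : AdjoinRoot F) = AdjoinRoot.mk F ((b : Polynomial (ZMod n))) :=
    (map_intCast (AdjoinRoot.mk F) b).symm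
  rw [ha, hb, ← AdjoinRoot.mk_X (f := F), ← map_mul, ← map_add] at h
  rw [AdjoinRoot.mk_eq_zero] at h
  rw [← Polynomial.C_eq_intCast, ← Polynomial.C_eq_intCast] at h
  have hpoly : ((C ((a:ZMod n)) : Polynomial (ZMod n)) + C ((b:ZMod n)) * X) = 0 := by
    by_contra hne
    have hle := Polynomial.natDegree_le_of_dvd h hne
    have hdb : ((C ((a:ZMod n)) : Polynomial (ZMod n)) + C ((b:ZMod n)) * X).natDegree ≤ 1 := by
      compute_degree
    omega
  have h0 := congrArg (fun p => Polynomial.coeff p 0) hpoly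
  have h1 := congrArg (fun p => Polynomial.coeff p 1) hpoly
  simp only [Polynomial.coeff_add, Polynomial.coeff_C_mul, Polynomial.coeff_C,
    Polynomial.coeff_X_zero, Polynomial.coeff_X_one, Polynomial.coeff_zero] at h0 h1
  norm_num at h0 h1
  constructor
  · rw [← ZMod.intCast_zmod_eq_zero_iff_dvd]; exact h0
  · rw [← ZMod.intCast_zmod_eq_zero_iff_dvd]; exact h1

private lemma f5_deg : 2 ≤ f5.natDegree := by
  rw [show f5 = X^2 + X + 1 from rfl]
  have : (X^2 + X + 1 : Polynomial (ZMod 5)).natDegree = 2 := by compute_degree!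
  omega

private lemma f3_deg : 2 ≤ f3.natDegree := by
  rw [show f3 = X^4 + X^3 + X^2 + X + 1 from rfl]
  have : (X^4 + X^3 + X^2 + X + 1 : Polynomial (ZMod 3)).natDegree = 4 := by compute_degree!
  omega

/- ### Evaluations in the ring of characteristic 3 -/

section B3
local notation "z" => AdjoinRoot.root f3

private lemma hz5 : z^5 = 1 := by linear_combination (z - 1) * hz3
private lemma hz7 : z^7 = z^2 := by linear_combination (z^3 - z^2) * hz3
private lemma hz13 : z^13 = z^3 := by linear_combination (z^3*(z^5+1)*(z-1)) * hz3

private lemma PhiB3 : aeval z Phi = 0 := by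
  rw [Phi_def]
  simp only [map_add, map_sub, map_pow, map_one, Polynomial.aeval_X]
  linear_combination (z^4+z^3+z^2+z+1) * hz3
    + ((-1:AdjoinRoot f3)*z + (-1)*z^2 + (-1)*z^3 + (-2)*z^4 + (-1)*z^5 + (-1)*z^6 + (-1)*z^7) * char3

private lemma prodPhi3B3 :
    (z^2+z+1) * ((z^4)^2+z^4+1) * (((z^2)^2+z^2+1) * ((z^3)^2+z^3+1)) = 1 := by
  linear_combination (z + z^2 + 2*z^4 + 2*z^6 + z^7 + 2*z^8 + z^9 + z^10 + z^11
    + 2*z^12 + z^14 + z^16) * hz3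

private lemma prodBadB3 : ((z^2+z+1)*(z-1)) * (((z^4)^2+z^4+1)*(z^4-1))
    * (((((z^2)^2+z^2+1))*(z^2-1)) * ((((z^3)^2+z^3+1))*(z^3-1))) = 2 := by
  linear_combination ((-4:AdjoinRoot f3) + (4)*z + (-1)*z^3 + z^4 + (-4)*z^5 + (3)*z^6 + z^7
    + (-1)*z^8 + z^9 + (-4)*z^10 + (3)*z^11 + z^12 + (-1)*z^13 + z^14 + (-2)*z^15 + z^16
    + z^17 + (-1)*z^18 + z^19 + (-2)*z^20 + z^21 + z^22 + (-1)*z^23 + (-1)*z^25 + z^26) * hz3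
    + char3

private lemma Jpow (j : ℕ) : z^j * (z^4)^j * ((z^2)^j * (z^3)^j) = 1 := by
  rw [← mul_pow, ← mul_pow, ← mul_pow]
  have h10 : z * z^4 * (z^2 * z^3) = 1 := by linear_combination (z^5 + 1) * hz5
  rw [h10, one_pow]

private lemma evalGood_z1 (e : ℤ) (j : ℕ) (g : Polynomial ℤ) :
    aeval z (GoodP e j g) = (e : AdjoinRoot f3) * z^j * (z^2+z+1) := by
  simp only [GoodP, map_add, map_sub, map_mul, map_pow, map_one, Polynomial.aeval_X,
    Polynomial.aeval_C, algebraMap_int_eq, eq_intCast, map_intCast]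
  linear_combination ((z - 1) + (z-1)*((z^2+z+1))*(aeval z g)) * hz3

private lemma evalGood_z2 (e : ℤ) (j : ℕ) (g : Polynomial ℤ) :
    aeval (z^2) (GoodP e j g) = (e : AdjoinRoot f3) * (z^2)^j * ((z^2)^2+z^2+1) := by
  simp only [GoodP, map_add, map_sub, map_mul, map_pow, map_one, Polynomial.aeval_X,
    Polynomial.aeval_C, algebraMap_int_eq, eq_intCast, map_intCast]
  linear_combination ((z-1)*(z^5+1)
    + (z^2-1)*((z^2)^2+z^2+1)*(1 - z + z^2 - z^3 + z^4)*(aeval (z^2) g)) * hz3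

private lemma evalGood_z3 (e : ℤ) (j : ℕ) (g : Polynomial ℤ) :
    aeval (z^3) (GoodP e j g) = (e : AdjoinRoot f3) * (z^3)^j * ((z^3)^2+z^3+1) := by
  simp only [GoodP, map_add, map_sub, map_mul, map_pow, map_one, Polynomial.aeval_X,
    Polynomial.aeval_C, algebraMap_int_eq, eq_intCast, map_intCast]
  linear_combination ((z-1)*(z^10+z^5+1)
    + (z^3-1)*((z^3)^2+z^3+1)*(1 - z + z^3 - z^4 + z^5 - z^7 + z^8)*(aeval (z^3) g)) * hz3

private lemma evalGood_z4 (e : ℤ) (j : ℕ) (g : Polynomial ℤ) :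
    aeval (z^4) (GoodP e j g) = (e : AdjoinRoot f3) * (z^4)^j * ((z^4)^2+z^4+1) := by
  simp only [GoodP, map_add, map_sub, map_mul, map_pow, map_one, Polynomial.aeval_X,
    Polynomial.aeval_C, algebraMap_int_eq, eq_intCast, map_intCast]
  linear_combination ((z-1)*(z^15+z^10+z^5+1)
    + (z^4-1)*((z^4)^2+z^4+1)*(1 - z + z^4 - z^6 + z^8 - z^11 + z^12)*(aeval (z^4) g)) * hz3

private lemma evalBad_z1 (e : ℤ) (j : ℕ) (g : Polynomial ℤ) :
    aeval z (BadP e j g) = (e : AdjoinRoot f3) * z^j * ((z^2+z+1)*(z-1)) := by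
  simp only [BadP, map_add, map_sub, map_mul, map_pow, map_one, Polynomial.aeval_X,
    Polynomial.aeval_C, algebraMap_int_eq, eq_intCast, map_intCast]
  linear_combination ((z - 1) + (z-1)*((z^2+z+1))*(aeval z g)) * hz3

private lemma evalBad_z2 (e : ℤ) (j : ℕ) (g : Polynomial ℤ) :
    aeval (z^2) (BadP e j g) = (e : AdjoinRoot f3) * (z^2)^j * (((z^2)^2+z^2+1)*(z^2-1)) := by
  simp only [BadP, map_add, map_sub, map_mul, map_pow, map_one, Polynomial.aeval_X,
    Polynomial.aeval_C, algebraMap_int_eq, eq_intCast, map_intCast]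
  linear_combination ((z-1)*(z^5+1)
    + (z^2-1)*((z^2)^2+z^2+1)*(1 - z + z^2 - z^3 + z^4)*(aeval (z^2) g)) * hz3

private lemma evalBad_z3 (e : ℤ) (j : ℕ) (g : Polynomial ℤ) :
    aeval (z^3) (BadP e j g) = (e : AdjoinRoot f3) * (z^3)^j * (((z^3)^2+z^3+1)*(z^3-1)) := by
  simp only [BadP, map_add, map_sub, map_mul, map_pow, map_one, Polynomial.aeval_X,
    Polynomial.aeval_C, algebraMap_int_eq, eq_intCast, map_intCast]
  linear_combination ((z-1)*(z^10+z^5+1)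
    + (z^3-1)*((z^3)^2+z^3+1)*(1 - z + z^3 - z^4 + z^5 - z^7 + z^8)*(aeval (z^3) g)) * hz3

private lemma evalBad_z4 (e : ℤ) (j : ℕ) (g : Polynomial ℤ) :
    aeval (z^4) (BadP e j g) = (e : AdjoinRoot f3) * (z^4)^j * (((z^4)^2+z^4+1)*(z^4-1)) := by
  simp only [BadP, map_add, map_sub, map_mul, map_pow, map_one, Polynomial.aeval_X,
    Polynomial.aeval_C, algebraMap_int_eq, eq_intCast, map_intCast]
  linear_combination ((z-1)*(z^15+z^10+z^5+1)
    + (z^4-1)*((z^4)^2+z^4+1)*(1 - z + z^4 - z^6 + z^8 - z^11 + z^12)*(aeval (z^4) g)) * hz3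

private lemma TnGood_B3 (e : ℤ) (he : e = 1 ∨ e = -1) (j : ℕ) (g : Polynomial ℤ) :
    aeval z (Tn (GoodP e j g)) = 1 := by
  have he4 : ((e:ℤ) : AdjoinRoot f3)^4 = 1 := by rcases he with rfl|rfl <;> norm_num
  rw [aeval_Tn, hz7, hz13, evalGood_z1, evalGood_z2, evalGood_z3, evalGood_z4]
  have hJ := Jpow j
  linear_combination ((z^2+z+1) * ((z^4)^2+z^4+1) * (((z^2)^2+z^2+1) * ((z^3)^2+z^3+1)))
      * (z^j * (z^4)^j * ((z^2)^j * (z^3)^j)) * he4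
    + ((z^2+z+1) * ((z^4)^2+z^4+1) * (((z^2)^2+z^2+1) * ((z^3)^2+z^3+1))) * hJ
    + prodPhi3B3

private lemma TnBad_B3 (e : ℤ) (he : e = 1 ∨ e = -1) (j : ℕ) (g : Polynomial ℤ) :
    aeval z (Tn (BadP e j g)) = 2 := by
  have he4 : ((e:ℤ) : AdjoinRoot f3)^4 = 1 := by rcases he with rfl|rfl <;> norm_num
  rw [aeval_Tn, hz7, hz13, evalBad_z1, evalBad_z2, evalBad_z3, evalBad_z4]
  have hJ := Jpow j
  linear_combination (((z^2+z+1)*(z-1)) * (((z^4)^2+z^4+1)*(z^4-1))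
      * (((((z^2)^2+z^2+1))*(z^2-1)) * ((((z^3)^2+z^3+1))*(z^3-1))))
      * (z^j * (z^4)^j * ((z^2)^j * (z^3)^j)) * he4
    + (((z^2+z+1)*(z-1)) * (((z^4)^2+z^4+1)*(z^4-1))
      * (((((z^2)^2+z^2+1))*(z^2-1)) * ((((z^3)^2+z^3+1))*(z^3-1)))) * hJ
    + prodBadB3
end B3

/- ### Evaluations in the ring of characteristic 5 -/

section B5
local notation "y" => AdjoinRoot.root f5

private lemma hy4 : y^4 = y := by linear_combination (y^2 - y) * hy5
private lemma hy7 : y^7 = y := by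
  linear_combination ((-1:AdjoinRoot f5)*y + y^2 - y^4 + y^5) * hy5
private lemma hy13 : y^13 = y := by
  linear_combination ((-1:AdjoinRoot f5)*y + y^2 - y^4 + y^5 - y^7 + y^8 - y^10 + y^11) * hy5
private lemma hy5pow : y^5 = y^2 := by linear_combination (y^3 - y^2) * hy5

private lemma PhiB5 : aeval y Phi = 0 := by
  rw [Phi_def]
  simp only [map_add, map_sub, map_pow, map_one, Polynomial.aeval_X]
  linear_combination ((y^2+y+1)^3) * hy5
    + ((-1:AdjoinRoot f5)*y - 2*y^2 - 3*y^3 - 4*y^4 - 3*y^5 - 2*y^6 - y^7) * char5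

private lemma Yunit : (y^2 - 1) * (2*y - 2) = 1 := by
  linear_combination ((-4:AdjoinRoot f5) + 2*y) * hy5 + char5

private lemma evalGood_y (e : ℤ) (j : ℕ) (g : Polynomial ℤ) :
    aeval y (GoodP e j g) = y^2 - 1 := by
  simp only [GoodP, map_add, map_sub, map_mul, map_pow, map_one, Polynomial.aeval_X,
    Polynomial.aeval_C, algebraMap_int_eq, eq_intCast, map_intCast]
  linear_combination ((y^3 - y^2) + (e : AdjoinRoot f5)*y^j
    + (y-1)*((y^4+y^3+y^2+y+1))*(aeval y g)) * hy5

private lemma evalBad_y (e : ℤ) (j : ℕ) (g : Polynomial ℤ) :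
    aeval y (BadP e j g) = y^2 - 1 := by
  simp only [BadP, map_add, map_sub, map_mul, map_pow, map_one, Polynomial.aeval_X,
    Polynomial.aeval_C, algebraMap_int_eq, eq_intCast, map_intCast]
  linear_combination ((y^3 - y^2) + (e : AdjoinRoot f5)*y^j*(y-1)
    + (y-1)*((y^4+y^3+y^2+y+1))*(aeval y g)) * hy5

private lemma TnGood_B5 (e : ℤ) (j : ℕ) (g : Polynomial ℤ) :
    aeval y (Tn (GoodP e j g)) = (y^2-1)^4 := by
  rw [aeval_Tn, hy4, hy7, hy13, evalGood_y]; ring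

private lemma TnBad_B5 (e : ℤ) (j : ℕ) (g : Polynomial ℤ) :
    aeval y (Tn (BadP e j g)) = (y^2-1)^4 := by
  rw [aeval_Tn, hy4, hy7, hy13, evalBad_y]; ring
end B5

/- ### The main contradiction -/

set_option maxHeartbeats 2000000 in
private lemma main_contra (α : ℂ) (hg : IsGood α) (hb : IsBad α) : False := by
  obtain ⟨u₁, v₁, g₁, j₁, e₁, hj₁, he₁, huv₁, hα₁⟩ := hg
  obtain ⟨u₂, v₂, g₂, j₂, e₂, hj₂, he₂, huv₂, hα₂⟩ := hb
  -- main divisibilities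
  have hMain : Phi ∣ u₁ * GoodP e₁ j₁ g₁ - u₂ * BadP e₂ j₂ g₂ := ker15 (by
    rw [map_sub, map_mul, map_mul, evalGood_C, evalBad_C, ← hα₁, ← hα₂, sub_self])
  have hU1 : Phi ∣ u₁ * v₁ - 1 := ker15 (by rw [map_sub, map_mul, huv₁, map_one, sub_self])
  have hU2 : Phi ∣ u₂ * v₂ - 1 := ker15 (by rw [map_sub, map_mul, huv₂, map_one, sub_self])
  have Tcong : ∀ {p q : Polynomial ℤ}, Phi ∣ p - q → Phi ∣ Tn p - Tn q := by
    intro p q h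
    apply ker15
    have e' : ∀ k : ℕ, Nat.Coprime k 15 → aeval (zeta15 ^ k) p = aeval (zeta15^k) q :=
      fun k hk => ev_congr (Phi_root hk) h
    have e1 := e' 1 (by norm_num); have e4 := e' 4 (by norm_num)
    have e7 := e' 7 (by norm_num); have e13 := e' 13 (by norm_num)
    rw [pow_one] at e1
    rw [map_sub, aeval_Tn, aeval_Tn, e1, e4, e7, e13, sub_self]
  have hTmain : Phi ∣ Tn u₁ * Tn (GoodP e₁ j₁ g₁) - Tn u₂ * Tn (BadP e₂ j₂ g₂) := by
    have h := Tcong hMain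
    rwa [Tn_mul, Tn_mul] at h
  have hT2 : Phi ∣ Tn u₂ * Tn v₂ - 1 := by
    have h := Tcong hU2; rwa [Tn_mul, Tn_one] at h
  have hWR : Phi ∣ Tn (u₁ * v₂) * Tn (v₁ * u₂) - 1 := by
    have hd : Phi ∣ (u₁ * v₂) * (v₁ * u₂) - 1 := by
      have heq : (u₁*v₂) * (v₁*u₂) - 1 = (u₁*v₁ - 1) * (u₂*v₂) + (u₂*v₂ - 1) := by ring
      rw [heq]; exact dvd_add (hU1.mul_right _) hU2
    have h := Tcong hd; rwa [Tn_mul, Tn_one] at h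
  -- the shape of Tn (u₁ * v₂)
  obtain ⟨A, B, hρ⟩ := shape (u₁ * v₂)
  -- complex values
  have hw1 : aeval zeta15 (Tn (u₁*v₂)) * aeval zeta15 (Tn (v₁*u₂)) = 1 := by
    have h := ev_congr Phi_root1 hWR
    simpa using h
  have hw2 : aeval (zeta15^2) (Tn (u₁*v₂)) * aeval (zeta15^2) (Tn (v₁*u₂)) = 1 := by
    have h := ev_congr (Phi_root (show Nat.Coprime 2 15 by norm_num)) hWR
    simpa using h
  have hv1 : aeval zeta15 (Tn (u₁*v₂)) = (A:ℂ) + (B:ℂ) * zeta15^5 := by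
    have h := ev_congr Phi_root1 hρ
    rw [h]
    simp [map_add, map_mul, map_pow, Polynomial.aeval_C, Polynomial.aeval_X,
      algebraMap_int_eq, eq_intCast]
  have hv2 : aeval (zeta15^2) (Tn (u₁*v₂)) = (A:ℂ) + (B:ℂ) * zeta15^10 := by
    have h := ev_congr (Phi_root (show Nat.Coprime 2 15 by norm_num)) hρ
    rw [h]
    simp only [map_add, map_mul, map_pow, Polynomial.aeval_C, Polynomial.aeval_X,
      algebraMap_int_eq, eq_intCast]
    rw [← pow_mul]
    norm_num
  have hNc : ((A^2 - A*B + B^2 : ℤ):ℂ)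
      * (aeval zeta15 (Tn (v₁*u₂)) * aeval (zeta15^2) (Tn (v₁*u₂))) = 1 := by
    have hNval : ((A^2 - A*B + B^2 : ℤ):ℂ)
        = ((A:ℂ) + (B:ℂ)*zeta15^5) * ((A:ℂ) + (B:ℂ)*zeta15^10) := by
      push_cast
      linear_combination (-(A:ℂ)*(B:ℂ)*(1+zeta15+zeta15^2)
        - (B:ℂ)^2*((-1:ℂ) - zeta15 - zeta15^2 + zeta15^5 + zeta15^6 + zeta15^7)) * hPz
    rw [hNval, ← hv1, ← hv2]
    linear_combination (aeval (zeta15^2) (Tn (u₁*v₂)) * aeval (zeta15^2) (Tn (v₁*u₂))) * hw1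
      + hw2
  have hNM : Phi ∣ C (A^2 - A*B + B^2) * (Tn (v₁*u₂) * (Tn (v₁*u₂)).comp (X^2)) - 1 :=
    ker15 (by
      simp only [map_sub, map_mul, map_one, Polynomial.aeval_C, algebraMap_int_eq, eq_intCast,
        map_intCast, Polynomial.aeval_comp, map_pow, Polynomial.aeval_X]
      rw [sub_eq_zero]
      exact hNc)
  have hN1 : A^2 - A*B + B^2 = 1 := by
    rcases Nunit _ _ hNM with h|h
    · exact h
    · exfalso; nlinarith [sq_nonneg (2*A - B), sq_nonneg B]
  -- bounds on A and B
  have hA2 : A^2 ≤ 1 := by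
    by_contra hcon; push_neg at hcon; nlinarith [sq_nonneg (2*B - A)]
  have hB2 : B^2 ≤ 1 := by
    by_contra hcon; push_neg at hcon; nlinarith [sq_nonneg (2*A - B)]
  have hAbd : -1 ≤ A ∧ A ≤ 1 := by
    constructor <;> nlinarith [sq_nonneg (A-1), sq_nonneg (A+1)]
  have hBbd : -1 ≤ B ∧ B ≤ 1 := by
    constructor <;> nlinarith [sq_nonneg (B-1), sq_nonneg (B+1)]
  -- characteristic 5 information
  have hmain5 := ev_congr PhiB5 hTmain
  rw [map_mul, map_mul, TnGood_B5, TnBad_B5] at hmain5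
  have hUV25 : aeval (AdjoinRoot.root f5) (Tn u₂) * aeval (AdjoinRoot.root f5) (Tn v₂) = 1 := by
    have h := ev_congr PhiB5 hT2
    simpa using h
  have hcan : aeval (AdjoinRoot.root f5) (Tn u₁) = aeval (AdjoinRoot.root f5) (Tn u₂) := by
    have h3 : ((AdjoinRoot.root f5)^2-1)^4 * (2*(AdjoinRoot.root f5)-2)^4 = 1 := by
      rw [← mul_pow, Yunit, one_pow]
    have h2 : aeval (AdjoinRoot.root f5) (Tn u₁)
          * (((AdjoinRoot.root f5)^2-1)^4 * (2*(AdjoinRoot.root f5)-2)^4)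
        = aeval (AdjoinRoot.root f5) (Tn u₂)
          * (((AdjoinRoot.root f5)^2-1)^4 * (2*(AdjoinRoot.root f5)-2)^4) := by
      linear_combination ((2*(AdjoinRoot.root f5)-2)^4) * hmain5
    rw [h3, mul_one, mul_one] at h2
    exact h2
  have hwy : aeval (AdjoinRoot.root f5) (Tn u₁) * aeval (AdjoinRoot.root f5) (Tn v₂)
      = (A : AdjoinRoot f5) + (B : AdjoinRoot f5) * (AdjoinRoot.root f5)^2 := by
    have h1 := ev_congr PhiB5 hρ
    rw [Tn_mul, map_mul] at h1
    rw [h1]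
    simp only [map_add, map_mul, map_pow, Polynomial.aeval_C, Polynomial.aeval_X,
      algebraMap_int_eq, eq_intCast, map_intCast]
    rw [hy5pow]
  have hABy : (A : AdjoinRoot f5) + (B : AdjoinRoot f5) * (AdjoinRoot.root f5)^2 = 1 := by
    rw [← hwy, hcan, hUV25]
  have hcast5 : ((A - B - 1 : ℤ) : AdjoinRoot f5) + ((-B : ℤ) : AdjoinRoot f5)
      * (AdjoinRoot.root f5) = 0 := by
    push_cast
    linear_combination hABy - ((B:ℤ) : AdjoinRoot f5) * hy5
  haveI : Fact (Nat.Prime 5) := ⟨by norm_num⟩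
  obtain ⟨hd1, hd2⟩ := coord_indep f5_deg _ _ hcast5
  have hA1 : A = 1 ∧ B = 0 := by omega
  -- characteristic 3 information
  have hmain3 := ev_congr PhiB3 hTmain
  rw [map_mul, map_mul, TnGood_B3 e₁ he₁ j₁ g₁, TnBad_B3 e₂ he₂ j₂ g₂, mul_one] at hmain3
  have hUV23 : aeval (AdjoinRoot.root f3) (Tn u₂) * aeval (AdjoinRoot.root f3) (Tn v₂) = 1 := by
    have h := ev_congr PhiB3 hT2
    simpa using h
  have hwz : aeval (AdjoinRoot.root f3) (Tn u₁) * aeval (AdjoinRoot.root f3) (Tn v₂) = 1 := by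
    have h1 := ev_congr PhiB3 hρ
    rw [Tn_mul, map_mul] at h1
    rw [h1, hA1.1, hA1.2]
    simp
  have h12 : (1 : AdjoinRoot f3) = 2 := by
    calc (1 : AdjoinRoot f3)
        = aeval (AdjoinRoot.root f3) (Tn u₁) * aeval (AdjoinRoot.root f3) (Tn v₂) := hwz.symm
      _ = (aeval (AdjoinRoot.root f3) (Tn u₂) * 2) * aeval (AdjoinRoot.root f3) (Tn v₂) := by
          rw [hmain3]
      _ = 2 * (aeval (AdjoinRoot.root f3) (Tn u₂) * aeval (AdjoinRoot.root f3) (Tn v₂)) := by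
          ring
      _ = 2 := by rw [hUV23, mul_one]
  have h0 : ((-1 : ℤ) : AdjoinRoot f3) + ((0 : ℤ) : AdjoinRoot f3) * (AdjoinRoot.root f3) = 0 := by
    push_cast
    linear_combination h12
  haveI : Fact (Nat.Prime 3) := ⟨by norm_num⟩
  obtain ⟨hd, _⟩ := coord_indep f3_deg _ _ h0
  omega

/- ### `1` is bad -/

private lemma one_isBad : IsBad (1 : ℂ) := by
  refine ⟨(1 : Polynomial ℤ) - 3*X + 3*X^2 - X^3 - X^4 + 2*X^5 - 2*X^6 + X^7,
    (-1 : Polynomial ℤ) - X + X^4 + X^5, 0, 1, 1, by norm_num, Or.inl rfl, ?_, ?_⟩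
  · have hid : (((1 : Polynomial ℤ) - 3*X + 3*X^2 - X^3 - X^4 + 2*X^5 - 2*X^6 + X^7)
        * ((-1 : Polynomial ℤ) - X + X^4 + X^5)) = 1 + Phi * (X^4 - 2) := by
      rw [Phi_def]; ring
    calc aeval zeta15 ((1 : Polynomial ℤ) - 3*X + 3*X^2 - X^3 - X^4 + 2*X^5 - 2*X^6 + X^7)
          * aeval zeta15 ((-1 : Polynomial ℤ) - X + X^4 + X^5)
        = aeval zeta15 (((1 : Polynomial ℤ) - 3*X + 3*X^2 - X^3 - X^4 + 2*X^5 - 2*X^6 + X^7)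
            * ((-1 : Polynomial ℤ) - X + X^4 + X^5)) := (map_mul _ _ _).symm
      _ = aeval zeta15 (1 + Phi * (X^4 - 2)) := by rw [hid]
      _ = 1 := by rw [map_add, map_one, map_mul, Phi_root1, zero_mul, add_zero]
  · have hid : (((1 : Polynomial ℤ) - 3*X + 3*X^2 - X^3 - X^4 + 2*X^5 - 2*X^6 + X^7)
        * ((-1 : Polynomial ℤ) - X + X^4 + X^5)) = 1 + Phi * (X^4 - 2) := by
      rw [Phi_def]; ring
    have hprod : aeval zeta15 ((1 : Polynomial ℤ) - 3*X + 3*X^2 - X^3 - X^4 + 2*X^5 - 2*X^6 + X^7)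
          * aeval zeta15 ((-1 : Polynomial ℤ) - X + X^4 + X^5) = 1 := by
      calc aeval zeta15 ((1 : Polynomial ℤ) - 3*X + 3*X^2 - X^3 - X^4 + 2*X^5 - 2*X^6 + X^7)
            * aeval zeta15 ((-1 : Polynomial ℤ) - X + X^4 + X^5)
          = aeval zeta15 (((1 : Polynomial ℤ) - 3*X + 3*X^2 - X^3 - X^4 + 2*X^5 - 2*X^6 + X^7)
              * ((-1 : Polynomial ℤ) - X + X^4 + X^5)) := (map_mul _ _ _).symm
        _ = aeval zeta15 (1 + Phi * (X^4 - 2)) := by rw [hid]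
        _ = 1 := by rw [map_add, map_one, map_mul, Phi_root1, zero_mul, add_zero]
    have hI : aeval zeta15 ((-1 : Polynomial ℤ) - X + X^4 + X^5)
        = -1 - zeta15 + zeta15^4 + zeta15^5 := by
      simp
    simp only [phi3z, phi5z, map_zero, mul_zero, add_zero, pow_one, Int.cast_one, one_mul]
    linear_combination (-1 : ℂ) * hprod
      + (aeval zeta15 ((1 : Polynomial ℤ) - 3*X + 3*X^2 - X^3 - X^4 + 2*X^5 - 2*X^6 + X^7)) * hI

theorem stmt8 : (∀ α : ℂ, IsGood α → ¬ IsBad α) ∧ IsBad (1 : ℂ) := by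
  exact ⟨fun α hg hb => (main_contra α hg hb).elim, one_isBad⟩
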